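/- Let SV be the twisted Schrödinger–Virasoro Lie algebra. Suppose every biderivation f of SV has the form f(x,y) = λ[x,y] + χ_Ω(x,y) for some λ ∈ ℂ and finitely supported Ω = (μ_k)_{k∈ℤ}. Then every commutative post-Lie algebra structure · on SV is trivial: x · y = 0 for all x, y ∈ SV. -/

import Mathlib

/-!
A commutative post-Lie product is a biderivation, so by the classification it equals
`λ [x, y] + χ_Ω(x, y)`. Commutativity against the antisymmetric bracket forces `λ = 0`
(test it on `L₀, M₁`), so the product vanishes as soon as one argument lies in
`span {Y_i, M_i}`, which contains every value `χ_Ω(L_m, L_n)`. The post-Lie identity for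
`[L₁, L₀] = L₁` then gives `Σ_k μ_k M_k = χ_Ω(L₁, L₋₁) = 0`, hence `Ω = 0`.
-/

section LieRing

variable {R A : Type*} [CommRing R] [LieRing A] [LieAlgebra R A]

theorem map_lie_left_of_comm (mul : A →ₗ[R] A →ₗ[R] A) (hcomm : ∀ x y, mul x y = mul y x)
    (hder : ∀ x y z, mul x ⁅y, z⁆ = ⁅mul x y, z⁆ + ⁅y, mul x z⁆) (x y z : A) :
    mul ⁅x, y⁆ z = ⁅x, mul y z⁆ + ⁅mul x z, y⁆ := by
  rw [hcomm, hder, hcomm z x, hcomm z y, add_comm]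

theorem map_lie_eq_zero_of_post_lie {mul : A →ₗ[R] A →ₗ[R] A} {W : Submodule R A}
    (hpost : ∀ x y z, mul ⁅x, y⁆ z = mul x (mul y z) - mul y (mul x z))
    (hW : ∀ x, ∀ w ∈ W, mul x w = 0) {x y z : A} (hxz : mul x z ∈ W) (hyz : mul y z ∈ W) :
    mul ⁅x, y⁆ z = 0 := by
  rw [hpost, hW _ _ hxz, hW _ _ hyz, sub_zero]

end LieRing

theorem LinearMap.eq_zero_of_basis_mem_or {R V P ι : Type*} [CommSemiring R] [AddCommMonoid V]
    [Module R V] [AddCommMonoid P] [Module R P] (b : Module.Basis ι R V)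
    {f : V →ₗ[R] V →ₗ[R] P} {S : Set V} {W : Submodule R V}
    (hb : ∀ i, b i ∈ S ∨ b i ∈ W) (hSS : ∀ x ∈ S, ∀ y ∈ S, f x y = 0)
    (hWl : ∀ w ∈ W, ∀ y, f w y = 0) (hWr : ∀ x, ∀ w ∈ W, f x w = 0) : f = 0 :=
  LinearMap.ext_basis b b fun i j => by
    rcases hb j with hj | hj
    · rcases hb i with hi | hi
      · simp [hSS _ hi _ hj]
      · simp [hWl _ hi]
    · simp [hWr _ _ hj]

theorem eq_zero_of_smul_lie_eq_smul_lie_swap {K A : Type*} [Field K] [NeZero (2 : K)]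
    [LieRing A] [LieAlgebra K A] {lam : K} {x y : A} (h : lam • ⁅x, y⁆ = lam • ⁅y, x⁆)
    (hxy : ⁅x, y⁆ ≠ 0) : lam = 0 := by
  rw [← lie_skew y x, smul_neg, eq_neg_iff_add_eq_zero, ← add_smul, ← two_mul] at h
  exact (mul_eq_zero.mp ((smul_eq_zero.mp h).resolve_right hxy)).resolve_left two_ne_zero

theorem basis_mem_range_or_mem_span {K V : Type*} [Semiring K] [AddCommMonoid V] [Module K V]
    {L Y M : ℤ → V} (b : Module.Basis (Fin 3 × ℤ) K V) (hbL : ∀ i, b (0, i) = L i)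
    (hbY : ∀ i, b (1, i) = Y i) (hbM : ∀ i, b (2, i) = M i) (i : Fin 3 × ℤ) :
    b i ∈ Set.range L ∨ b i ∈ Submodule.span K (Set.range Y ∪ Set.range M) := by
  obtain ⟨c, j⟩ := i
  fin_cases c
  · exact .inl ⟨j, (hbL j).symm⟩
  · exact .inr (Submodule.subset_span (.inl ⟨j, (hbY j).symm⟩))
  · exact .inr (Submodule.subset_span (.inr ⟨j, (hbM j).symm⟩))

theorem stmt10_general
    (V : Type) [LieRing V] [LieAlgebra ℂ V]
    (L Y M : ℤ → V)
    (b : Module.Basis (Fin 3 × ℤ) ℂ V)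
    (hbL : ∀ i : ℤ, b ((0 : Fin 3), i) = L i)
    (hbY : ∀ i : ℤ, b ((1 : Fin 3), i) = Y i)
    (hbM : ∀ i : ℤ, b ((2 : Fin 3), i) = M i)
    (hLL : ∀ m n : ℤ, ⁅L m, L n⁆ = ((m : ℂ) - n) • L (m + n))
    (hLM : ∀ m n : ℤ, ⁅L m, M n⁆ = (-(n : ℂ)) • M (m + n))
    (hclass : ∀ f : V →ₗ[ℂ] V →ₗ[ℂ] V,
      ((∀ x y z : V, f ⁅x, y⁆ z = ⁅x, f y z⁆ + ⁅f x z, y⁆) ∧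
       (∀ x y z : V, f x ⁅y, z⁆ = ⁅f x y, z⁆ + ⁅y, f x z⁆)) →
      ∃ (lam : ℂ) (μ : ℤ →₀ ℂ),
        (∀ m n : ℤ, f (L m) (L n) = lam • ⁅L m, L n⁆ + μ.sum fun k c => c • M (m + n + k)) ∧
        (∀ x y : V,
          (x ∈ Submodule.span ℂ (Set.range Y ∪ Set.range M) ∨
           y ∈ Submodule.span ℂ (Set.range Y ∪ Set.range M)) → f x y = lam • ⁅x, y⁆))
    (mul : V →ₗ[ℂ] V →ₗ[ℂ] V)
    (hcomm : ∀ x y : V, mul x y = mul y x)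
    (hpost : ∀ x y z : V, mul ⁅x, y⁆ z = mul x (mul y z) - mul y (mul x z))
    (hder : ∀ x y z : V, mul x ⁅y, z⁆ = ⁅mul x y, z⁆ + ⁅y, mul x z⁆) :
    ∀ x y : V, mul x y = 0 := by
  obtain ⟨lam, μ, hmul_LL_lam, hmul_span⟩ :=
    hclass mul ⟨map_lie_left_of_comm mul hcomm hder, hder⟩
  set W := Submodule.span ℂ (Set.range Y ∪ Set.range M)
  have hM_mem (j : ℤ) : M j ∈ W := Submodule.subset_span (Or.inr ⟨j, rfl⟩)
  have hlam : lam = 0 := by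
    refine eq_zero_of_smul_lie_eq_smul_lie_swap (x := L 0) (y := M 1) ?_ ?_
    · rw [← hmul_span _ _ (.inr (hM_mem 1)), ← hmul_span _ _ (.inl (hM_mem 1)), hcomm]
    · rw [hLM, ← hbM]; simp [b.ne_zero]
  have hmul_of_mem_W (x w : V) (hw : w ∈ W) : mul x w = 0 := by
    rw [hmul_span x w (.inr hw), hlam, zero_smul]
  have hmul_LL (m n : ℤ) : mul (L m) (L n) = μ.sum fun k c => c • M (m + n + k) := by
    rw [hmul_LL_lam, hlam, zero_smul, zero_add]
  have hmul_L_mem (m n : ℤ) : mul (L m) (L n) ∈ W :=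
    hmul_LL m n ▸ Submodule.sum_mem _ fun k _ => Submodule.smul_mem _ _ (hM_mem _)
  have hμ : μ = 0 := by
    have hM_li : LinearIndependent ℂ M := by
      simpa only [Function.comp_def, hbM] using
        b.linearIndependent.comp _ (Prod.mk_right_injective (2 : Fin 3))
    refine linearIndependent_iff.mp hM_li μ ?_
    have h :=
      map_lie_eq_zero_of_post_lie hpost hmul_of_mem_W (hmul_L_mem 1 (-1)) (hmul_L_mem 0 (-1))
    simpa [hLL, hmul_LL, Finsupp.linearCombination_apply] using h
  have hmul : mul = 0 := by
    refine LinearMap.eq_zero_of_basis_mem_or b (basis_mem_range_or_mem_span b hbL hbY hbM) ?_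
      (fun w hw y => hcomm w y ▸ hmul_of_mem_W y w hw) hmul_of_mem_W
    rintro _ ⟨m, rfl⟩ _ ⟨n, rfl⟩
    simp [hmul_LL, hμ]
  simp [hmul]

theorem stmt10
    (V : Type) [LieRing V] [LieAlgebra ℂ V]
    (L Y M : ℤ → V)
    (b : Module.Basis (Fin 3 × ℤ) ℂ V)
    (hbL : ∀ i : ℤ, b ((0 : Fin 3), i) = L i)
    (hbY : ∀ i : ℤ, b ((1 : Fin 3), i) = Y i)
    (hbM : ∀ i : ℤ, b ((2 : Fin 3), i) = M i)
    (hLL : ∀ m n : ℤ, ⁅L m, L n⁆ = ((m : ℂ) - n) • L (m + n))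
    (hLY : ∀ m n : ℤ, ⁅L m, Y n⁆ = ((m : ℂ) / 2 - n) • Y (m + n))
    (hLM : ∀ m n : ℤ, ⁅L m, M n⁆ = (-(n : ℂ)) • M (m + n))
    (hYY : ∀ m n : ℤ, ⁅Y m, Y n⁆ = ((m : ℂ) - n) • M (m + n))
    (hYM : ∀ m n : ℤ, ⁅Y m, M n⁆ = 0)
    (hMM : ∀ m n : ℤ, ⁅M m, M n⁆ = 0)
    (hclass : ∀ f : V →ₗ[ℂ] V →ₗ[ℂ] V,
      ((∀ x y z : V, f ⁅x, y⁆ z = ⁅x, f y z⁆ + ⁅f x z, y⁆) ∧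
       (∀ x y z : V, f x ⁅y, z⁆ = ⁅f x y, z⁆ + ⁅y, f x z⁆)) →
      ∃ (lam : ℂ) (μ : ℤ →₀ ℂ),
        (∀ m n : ℤ, f (L m) (L n) = lam • ⁅L m, L n⁆ + μ.sum fun k c => c • M (m + n + k)) ∧
        (∀ x y : V,
          (x ∈ Submodule.span ℂ (Set.range Y ∪ Set.range M) ∨
           y ∈ Submodule.span ℂ (Set.range Y ∪ Set.range M)) → f x y = lam • ⁅x, y⁆))
    (mul : V →ₗ[ℂ] V →ₗ[ℂ] V)
    (hcomm : ∀ x y : V, mul x y = mul y x)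
    (hpost : ∀ x y z : V, mul ⁅x, y⁆ z = mul x (mul y z) - mul y (mul x z))
    (hder : ∀ x y z : V, mul x ⁅y, z⁆ = ⁅mul x y, z⁆ + ⁅y, mul x z⁆) :
    ∀ x y : V, mul x y = 0 :=
  stmt10_general V L Y M b hbL hbY hbM hLL hLM hclass mul hcomm hpost hder
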